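/- The map p ↦ v_p given by a rotation center satisfies the preserved distance property: for the 2-tensor P_A = p∧q (a line A) and any affine points x, y ∈ R^3 (embedded as (x,1),(y,1) ∈ R^4), the velocity vectors v_x, v_y extracted from M(x) = P_A ∧ (x,1) and M(y) = P_A ∧ (y,1) via v = (M234, −M134, M124) satisfy (v_x − v_y)·(x − y) = 0. -/

import Mathlib

/-! The velocity field of any center `P ∈ Λ²ℝ⁴` is affine, `v_x = v_0 + ω × x`, with the angular
velocity `ω` read off from the components `P14, P24, P34`. Hence `v_x - v_y = ω × (x - y)`, which is
orthogonal to `x - y`. -/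

def plucker (p q : Fin 4 → ℝ) : Fin 6 → ℝ :=
  ![p 0 * q 1 - p 1 * q 0, p 0 * q 2 - p 2 * q 0, p 0 * q 3 - p 3 * q 0,
    p 1 * q 2 - p 2 * q 1, p 1 * q 3 - p 3 * q 1, p 2 * q 3 - p 3 * q 2]

def wedge3 (P : Fin 6 → ℝ) (m : Fin 4 → ℝ) : Fin 4 → ℝ :=
  ![P 0 * m 2 - P 1 * m 1 + P 3 * m 0,
    P 0 * m 3 - P 2 * m 1 + P 4 * m 0,
    P 1 * m 3 - P 2 * m 2 + P 5 * m 0,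
    P 3 * m 3 - P 4 * m 2 + P 5 * m 1]

def velocity (P : Fin 6 → ℝ) (x : Fin 3 → ℝ) : Fin 3 → ℝ :=
  ![wedge3 P ![x 0, x 1, x 2, 1] 3,
    -(wedge3 P ![x 0, x 1, x 2, 1] 2),
    wedge3 P ![x 0, x 1, x 2, 1] 1]

open Matrix

def angularVelocity (P : Fin 6 → ℝ) : Fin 3 → ℝ :=
  -![P 2, P 4, P 5]

theorem velocity_eq_velocity_zero_add_cross (P : Fin 6 → ℝ) (x : Fin 3 → ℝ) :
    velocity P x = velocity P 0 + angularVelocity P ⨯₃ x := by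
  ext i
  fin_cases i <;>
    simp only [velocity, wedge3, angularVelocity, cross_apply, Fin.zero_eta, Fin.mk_one,
      Fin.reduceFinMk, Fin.isValue, cons_val, Pi.add_apply, Pi.neg_apply, Pi.zero_apply] <;>
    ring

theorem velocity_sub_velocity (P : Fin 6 → ℝ) (x y : Fin 3 → ℝ) :
    velocity P x - velocity P y = angularVelocity P ⨯₃ (x - y) := by
  rw [velocity_eq_velocity_zero_add_cross P x, velocity_eq_velocity_zero_add_cross P y, map_sub,
    add_sub_add_left_eq_sub]

theorem velocity_sub_velocity_dotProduct (P : Fin 6 → ℝ) (x y : Fin 3 → ℝ) :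
    (velocity P x - velocity P y) ⬝ᵥ (x - y) = 0 := by
  rw [velocity_sub_velocity, dotProduct_comm, dot_cross_self]

theorem preserved_distance_property (p q : Fin 4 → ℝ) (x y : Fin 3 → ℝ) :
    (velocity (plucker p q) x 0 - velocity (plucker p q) y 0) * (x 0 - y 0) +
    (velocity (plucker p q) x 1 - velocity (plucker p q) y 1) * (x 1 - y 1) +
    (velocity (plucker p q) x 2 - velocity (plucker p q) y 2) * (x 2 - y 2) = 0 := by
  simpa [dotProduct, Fin.sum_univ_three, add_assoc] using
    velocity_sub_velocity_dotProduct (plucker p q) x y
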